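/- arXiv:2403.13195 — 2 statements merged into one kernel-verified Lean document; each statement's English description precedes it below -/
import Mathlib

section
/- Define the multivariate Hermite basis polynomial H_{(a,k)}(x₁,…,xₙ) = ∏_{i=1}^n (xᵢ − aᵢ)^{kᵢ} H_{aᵢ}(xᵢ) / kᵢ! for a grid point a and multi-index k with 0 ≤ kᵢ ≤ νᵢ(aᵢ) − 1. Then for any grid point b ≠ a and any multi-index m with 0 ≤ mᵢ ≤ νᵢ(bᵢ) − 1, the mixed partial derivative ∂^m H_{(a,k)} evaluated at b is zero. -/
/-! Since `b j ≠ a j` for some `j`, the factor `H_{a j}` of `H_{(a,k)}` contains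
`(x_j - b_j)^{ν_j(b_j)}`. Derivatives in other variables preserve divisibility by this power and
each `∂_j` lowers the exponent by at most one, so `∂^m H_{(a,k)}` is still divisible by
`(x_j - b_j)^{ν_j(b_j) - m_j}`, a positive power, and therefore vanishes at `b`. -/

open MvPolynomial

/-- The univariate Hermite factor `H_{aᵢ}` placed in variable `i`. -/
noncomputable def hermiteFactor {n : ℕ} (A : Fin n → Finset ℝ) (ν : Fin n → ℝ → ℕ)
    (i : Fin n) (ai : ℝ) : MvPolynomial (Fin n) ℝ :=
  ∏ c ∈ (A i).erase ai, (C ((ai - c)⁻¹) * (X i - C c)) ^ ν i c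

/-- The multivariate Hermite basis polynomial
`H_{(a,k)}(x) = ∏ᵢ (xᵢ - aᵢ)^{kᵢ} H_{aᵢ}(xᵢ) / kᵢ!`. -/
noncomputable def hermiteBasis {n : ℕ} (A : Fin n → Finset ℝ) (ν : Fin n → ℝ → ℕ)
    (a : Fin n → ℝ) (k : Fin n → ℕ) : MvPolynomial (Fin n) ℝ :=
  ∏ i, (C ((1 : ℝ) / (k i).factorial) * (X i - C (a i)) ^ (k i) *
      hermiteFactor A ν i (a i))

/-- The mixed partial derivative operator `∂^m = ∏ᵢ ∂ᵢ^{mᵢ}`. -/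
noncomputable def mixedPderiv {n : ℕ} (m : Fin n → ℕ)
    (p : MvPolynomial (Fin n) ℝ) : MvPolynomial (Fin n) ℝ :=
  (List.finRange n).foldr (fun i q => (fun r => pderiv i r)^[m i] q) p

namespace MvPolynomial

section Divisibility

variable {R σ : Type*} [CommSemiring R] {i : σ} {p q : MvPolynomial σ R}

lemma dvd_pderiv_of_dvd (hq : pderiv i q = 0) (h : q ∣ p) : q ∣ pderiv i p := by
  obtain ⟨r, rfl⟩ := h
  rw [pderiv_mul, hq, zero_mul, zero_add]
  exact dvd_mul_right _ _

lemma dvd_iterate_pderiv_of_dvd (hq : pderiv i q = 0) (h : q ∣ p) (r : ℕ) :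
    q ∣ (pderiv i)^[r] p := by
  induction r with
  | zero => exact h
  | succ r ih => rw [Function.iterate_succ_apply']; exact dvd_pderiv_of_dvd hq ih

lemma pow_dvd_pderiv_of_pow_succ_dvd {t : ℕ} (h : q ^ (t + 1) ∣ p) : q ^ t ∣ pderiv i p := by
  obtain ⟨r, rfl⟩ := h
  rw [pderiv_mul, pderiv_pow, Nat.add_sub_cancel, pow_succ]
  exact dvd_add (dvd_mul_of_dvd_left (dvd_mul_of_dvd_left (dvd_mul_left _ _) _) _)
    (dvd_mul_of_dvd_left (dvd_mul_right _ _) _)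

lemma pow_dvd_iterate_pderiv_of_pow_add_dvd {s r : ℕ} (h : q ^ (s + r) ∣ p) :
    q ^ s ∣ (pderiv i)^[r] p := by
  induction r generalizing p with
  | zero => exact h
  | succ r ih =>
    rw [Function.iterate_succ_apply]
    exact ih (pow_dvd_pderiv_of_pow_succ_dvd (by rwa [← add_assoc] at h))

end Divisibility

section LinearFactor

variable {R σ : Type*} [CommRing R] {j : σ} {c : R} {p : MvPolynomial σ R}

lemma pderiv_X_sub_C_pow_of_ne {i : σ} (hij : i ≠ j) (t : ℕ) :
    pderiv i ((X j - C c) ^ t) = 0 := by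
  rw [pderiv_pow, map_sub, pderiv_X_of_ne hij.symm, pderiv_C, sub_zero, mul_zero]

lemma X_sub_C_pow_dvd_foldr_iterate_pderiv [DecidableEq σ] (m : σ → ℕ) (L : List σ) {s : ℕ}
    (h : (X j - C c) ^ (s + L.count j * m j) ∣ p) :
    (X j - C c) ^ s ∣ L.foldr (fun i q => (pderiv i)^[m i] q) p := by
  induction L generalizing s with
  | nil => simpa using h
  | cons i L ih =>
    rw [List.foldr_cons]
    by_cases hij : i = j
    · subst hij
      refine pow_dvd_iterate_pderiv_of_pow_add_dvd (ih ?_)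
      rwa [List.count_cons_self, add_one_mul, ← add_assoc, add_right_comm] at h
    · refine dvd_iterate_pderiv_of_dvd (pderiv_X_sub_C_pow_of_ne hij s) (ih ?_) _
      rwa [List.count_cons_of_ne hij] at h

lemma eval_eq_zero_of_X_sub_C_pow_dvd {x : σ → R} {s : ℕ} (hs : s ≠ 0)
    (h : (X j - C (x j)) ^ s ∣ p) : eval x p = 0 := by
  obtain ⟨q, rfl⟩ := h
  simp [zero_pow hs]

end LinearFactor

end MvPolynomial

lemma X_sub_C_pow_dvd_mixedPderiv {n : ℕ} (m : Fin n → ℕ) {j : Fin n} {c : ℝ} {s : ℕ}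
    {p : MvPolynomial (Fin n) ℝ} (h : (X j - C c) ^ (s + m j) ∣ p) :
    (X j - C c) ^ s ∣ mixedPderiv m p :=
  X_sub_C_pow_dvd_foldr_iterate_pderiv m _ (by rwa [List.count_finRange, one_mul])

lemma X_sub_C_pow_dvd_hermiteFactor {n : ℕ} (A : Fin n → Finset ℝ) (ν : Fin n → ℝ → ℕ)
    {j : Fin n} {c d : ℝ} (hc : c ∈ A j) (hcd : c ≠ d) :
    (X j - C c) ^ ν j c ∣ hermiteFactor A ν j d :=
  (pow_dvd_pow_of_dvd (dvd_mul_left _ _) _).trans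
    (Finset.dvd_prod_of_mem _ (Finset.mem_erase.mpr ⟨hcd, hc⟩))

lemma X_sub_C_pow_dvd_hermiteBasis {n : ℕ} (A : Fin n → Finset ℝ) (ν : Fin n → ℝ → ℕ)
    {a : Fin n → ℝ} (k : Fin n → ℕ) {j : Fin n} {c : ℝ} (hc : c ∈ A j) (hca : c ≠ a j) :
    (X j - C c) ^ ν j c ∣ hermiteBasis A ν a k :=
  (X_sub_C_pow_dvd_hermiteFactor A ν hc hca).trans
    ((dvd_mul_left _ _).trans (Finset.dvd_prod_of_mem _ (Finset.mem_univ j)))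

theorem hermite_basis_mixed_deriv_vanishes_at_other_point_general
    {n : ℕ} (A : Fin n → Finset ℝ) (ν : Fin n → ℝ → ℕ)
    (hν : ∀ i, ∀ x ∈ A i, 1 ≤ ν i x)
    (a b : Fin n → ℝ) (hb : ∀ i, b i ∈ A i)
    (hab : a ≠ b)
    (k m : Fin n → ℕ)
    (hm : ∀ i, m i ≤ ν i (b i) - 1) :
    eval b (mixedPderiv m (hermiteBasis A ν a k)) = 0 := by
  obtain ⟨j, hj⟩ := Function.ne_iff.mp hab
  have hmj := hm j
  have hνj := hν j (b j) (hb j)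
  refine eval_eq_zero_of_X_sub_C_pow_dvd (j := j) (s := ν j (b j) - m j) (by omega) ?_
  apply X_sub_C_pow_dvd_mixedPderiv
  rw [Nat.sub_add_cancel (by omega)]
  exact X_sub_C_pow_dvd_hermiteBasis A ν k (hb j) (Ne.symm hj)

theorem hermite_basis_mixed_deriv_vanishes_at_other_point
    {n : ℕ} (A : Fin n → Finset ℝ) (ν : Fin n → ℝ → ℕ)
    (hν : ∀ i, ∀ x ∈ A i, 1 ≤ ν i x)
    (a b : Fin n → ℝ) (ha : ∀ i, a i ∈ A i) (hb : ∀ i, b i ∈ A i)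
    (hab : a ≠ b)
    (k m : Fin n → ℕ)
    (hk : ∀ i, k i ≤ ν i (a i) - 1) (hm : ∀ i, m i ≤ ν i (b i) - 1) :
    eval b (mixedPderiv m (hermiteBasis A ν a k)) = 0 :=
  hermite_basis_mixed_deriv_vanishes_at_other_point_general A ν hν a b hb hab k m hm
end

section
/- With H_{(a,k)} as the multivariate Hermite basis polynomial, for a grid point a and multi-indices k, m in [0, ν(a) − 1], the evaluation of ∂^m H_{(a,k)} at a equals 1 if m = k, and equals 0 if m < k componentwise or if m and k are incomparable in the componentwise order. -/
open MvPolynomial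

namespace HermiteAux

variable {n : ℕ}

lemma pderiv_comm' (i j : Fin n) (p : MvPolynomial (Fin n) ℝ) :
    pderiv i (pderiv j p) = pderiv j (pderiv i p) := by
  induction p using MvPolynomial.induction_on with
  | C a => simp [pderiv_C]
  | add p q hp hq => simp [map_add, hp, hq]
  | mul_X p s hp =>
      classical
      simp only [pderiv_mul, map_add, hp, pderiv_X, Pi.single_apply]
      split_ifs <;> simp <;> ring

/-- `p` is "univariate in `j`": all other partials vanish. -/
def Uni (j : Fin n) (p : MvPolynomial (Fin n) ℝ) : Prop :=
  ∀ i, i ≠ j → pderiv i p = 0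

lemma Uni.mul {j : Fin n} {p q : MvPolynomial (Fin n) ℝ} (hp : Uni j p) (hq : Uni j q) :
    Uni j (p * q) := fun i hi => by simp [pderiv_mul, hp i hi, hq i hi]

lemma Uni.one {j : Fin n} : Uni j (1 : MvPolynomial (Fin n) ℝ) := fun i _ => pderiv_one

lemma Uni.C {j : Fin n} (c : ℝ) : Uni j (MvPolynomial.C c) := fun i _ => pderiv_C

lemma Uni.X {j : Fin n} : Uni j (MvPolynomial.X j) := fun i hi => pderiv_X_of_ne (Ne.symm hi)

lemma Uni.sub {j : Fin n} {p q : MvPolynomial (Fin n) ℝ} (hp : Uni j p) (hq : Uni j q) :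
    Uni j (p - q) := fun i hi => by simp [map_sub, hp i hi, hq i hi]

lemma Uni.pow {j : Fin n} {p : MvPolynomial (Fin n) ℝ} (hp : Uni j p) (e : ℕ) :
    Uni j (p ^ e) := by
  induction e with
  | zero => simpa using Uni.one
  | succ e ih => rw [pow_succ]; exact ih.mul hp

lemma Uni.prod {j : Fin n} {α : Type*} {s : Finset α} {f : α → MvPolynomial (Fin n) ℝ}
    (h : ∀ x ∈ s, Uni j (f x)) : Uni j (∏ x ∈ s, f x) := by
  classical
  induction s using Finset.induction_on with
  | empty => simpa using Uni.one
  | insert _ _ hx ih =>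
      rw [Finset.prod_insert hx]
      exact (h _ (Finset.mem_insert_self _ _)).mul
        (ih fun x hxs => h x (Finset.mem_insert_of_mem hxs))

lemma Uni.pderivSelf {j : Fin n} {p : MvPolynomial (Fin n) ℝ} (hp : Uni j p) :
    Uni j (pderiv j p) := fun i hi => by
  rw [pderiv_comm', hp i hi, map_zero]

lemma Uni.pderiv_iter {j : Fin n} {p : MvPolynomial (Fin n) ℝ} (hp : Uni j p) (t : ℕ) :
    Uni j ((fun r => pderiv j r)^[t] p) := by
  induction t with
  | zero => simpa using hp
  | succ t ih => rw [Function.iterate_succ']; exact Uni.pderivSelf ih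

/-- iterated `pderiv i` of a product of univariate factors hits only factor `i`. -/
lemma iter_pderiv_prod (i : Fin n) (t : ℕ) (g : Fin n → MvPolynomial (Fin n) ℝ)
    (hg : ∀ j, Uni j (g j)) :
    (fun r => pderiv i r)^[t] (∏ j, g j) =
      ∏ j, (if j = i then (fun r => pderiv i r)^[t] (g j) else g j) := by
  induction t with
  | zero => simp
  | succ t ih =>
      simp only [Function.iterate_succ', Function.comp_apply]
      rw [ih]
      classical
      have hsplit := fun (h : Fin n → MvPolynomial (Fin n) ℝ) =>
        Finset.prod_eq_mul_prod_sdiff_singleton_of_mem (Finset.mem_univ i) h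
      rw [hsplit, hsplit]
      simp only [if_pos rfl]
      have hdiff : ∀ (h : Fin n → MvPolynomial (Fin n) ℝ),
          (∏ j ∈ Finset.univ \ {i}, (if j = i then h j else g j))
            = ∏ j ∈ Finset.univ \ {i}, g j := by
        intro h
        apply Finset.prod_congr rfl
        intro j hj
        have hji : j ≠ i := by simpa using (Finset.mem_sdiff.mp hj).2
        rw [if_neg hji]
      rw [hdiff, hdiff]
      have hQ : pderiv i (∏ j ∈ Finset.univ \ {i}, g j) = 0 := by
        refine Finset.prod_induction _ (fun q => pderiv i q = 0)
          (fun a b ha hb => by simp [pderiv_mul, ha, hb]) pderiv_one ?_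
        intro j hj
        have hji : j ≠ i := by simpa using (Finset.mem_sdiff.mp hj).2
        exact hg j i (Ne.symm hji)
      rw [pderiv_mul, hQ, mul_zero, add_zero]
      simp

/-- Key univariate computation. -/
lemma iter_pderiv_sub_pow (i : Fin n) (ai : ℝ) (q : MvPolynomial (Fin n) ℝ) (k : ℕ) :
    ∀ t, t ≤ k → ∃ r : MvPolynomial (Fin n) ℝ,
      (fun p => pderiv i p)^[t] ((X i - C ai) ^ k * q) =
        C ((k.descFactorial t : ℕ) : ℝ) * (X i - C ai) ^ (k - t) * q
          + (X i - C ai) ^ (k - t + 1) * r := by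
  intro t
  induction t with
  | zero => intro _; exact ⟨0, by simp⟩
  | succ t ih =>
      intro ht
      obtain ⟨r, hr⟩ := ih (Nat.le_of_succ_le ht)
      have hs : k - t = (k - (t + 1)) + 1 := by omega
      refine ⟨C ((k.descFactorial t : ℕ) : ℝ) * pderiv i q
        + C (((k - (t+1) : ℕ) + 2 : ℝ)) * r + (X i - C ai) * pderiv i r, ?_⟩
      rw [Function.iterate_succ', Function.comp_apply, hr, hs]
      have hd : ((k.descFactorial (t+1) : ℕ) : ℝ)
          = ((k - (t+1) : ℕ) + 1) * ((k.descFactorial t : ℕ) : ℝ) := by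
        rw [Nat.descFactorial_succ]
        have : k - t = (k - (t+1)) + 1 := hs
        push_cast [this]
        ring
      have hder : pderiv i (X i - C ai) = 1 := by simp
      simp only [map_add, map_mul, pderiv_mul, pderiv_C, pderiv_pow, hder, hd,
        map_natCast, map_ofNat, map_one, Derivation.map_natCast]
      push_cast
      ring

end HermiteAux

open HermiteAux

theorem hermite_basis_mixed_deriv_at_same_point
    {n : ℕ} (A : Fin n → Finset ℝ) (ν : Fin n → ℝ → ℕ)
    (hν : ∀ i, ∀ x ∈ A i, 1 ≤ ν i x)
    (a : Fin n → ℝ) (ha : ∀ i, a i ∈ A i)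
    (k m : Fin n → ℕ)
    (hk : ∀ i, k i ≤ ν i (a i) - 1) (hm : ∀ i, m i ≤ ν i (a i) - 1) :
    (m = k → eval a (mixedPderiv m (hermiteBasis A ν a k)) = 1) ∧
    (m ≤ k ∧ m ≠ k → eval a (mixedPderiv m (hermiteBasis A ν a k)) = 0) ∧
    (¬ m ≤ k ∧ ¬ k ≤ m → eval a (mixedPderiv m (hermiteBasis A ν a k)) = 0) := by
  classical
  -- the factor polynomials
  set g : Fin n → MvPolynomial (Fin n) ℝ := fun i =>
    C ((1 : ℝ) / (k i).factorial) * (X i - C (a i)) ^ (k i) * hermiteFactor A ν i (a i)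
    with hg_def
  have hUni : ∀ j, Uni j (g j) := by
    intro j
    refine ((Uni.C _).mul (((Uni.X).sub (Uni.C _)).pow _)).mul ?_
    exact Uni.prod fun c _ => (((Uni.C _).mul ((Uni.X).sub (Uni.C _))).pow _)
  have hHeval : ∀ i, eval a (hermiteFactor A ν i (a i)) = 1 := by
    intro i
    rw [hermiteFactor, map_prod]
    apply Finset.prod_eq_one
    intro c hc
    have hc' : c ≠ a i := Finset.ne_of_mem_erase hc
    have : a i - c ≠ 0 := sub_ne_zero.mpr (Ne.symm hc')
    simp [inv_mul_cancel₀ this]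
  -- reduce mixedPderiv to product of per-variable iterated derivatives
  have key : mixedPderiv m (hermiteBasis A ν a k) =
      ∏ j, (fun r => pderiv j r)^[m j] (g j) := by
    rw [hermiteBasis, mixedPderiv]
    have : ∀ (L : List (Fin n)), L.Nodup →
        L.foldr (fun i q => (fun r => pderiv i r)^[m i] q) (∏ j, g j)
          = ∏ j, (if j ∈ L then (fun r => pderiv j r)^[m j] (g j) else g j) := by
      intro L hL
      induction L with
      | nil => simp
      | cons i L ihL =>
          have hiL : i ∉ L := (List.nodup_cons.mp hL).1
          rw [List.foldr_cons, ihL (List.nodup_cons.mp hL).2]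
          have hUni' : ∀ j, Uni j (if j ∈ L then (fun r => pderiv j r)^[m j] (g j) else g j) := by
            intro j
            split_ifs
            · exact (hUni j).pderiv_iter _
            · exact hUni j
          rw [iter_pderiv_prod i (m i) _ hUni']
          apply Finset.prod_congr rfl
          intro j _
          by_cases hji : j = i
          · subst hji
            rw [if_pos rfl, if_pos List.mem_cons_self, if_neg hiL]
          · by_cases hjL : j ∈ L <;> simp [List.mem_cons, hjL, hji]
    rw [this (List.finRange n) (List.nodup_finRange n)]
    apply Finset.prod_congr rfl
    intro j _
    rw [if_pos (List.mem_finRange j)]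
  -- evaluation of each factor
  have hfac : ∀ i, m i ≤ k i →
      eval a ((fun r => pderiv i r)^[m i] (g i)) = if m i = k i then 1 else 0 := by
    intro i hmi
    have hcomm : g i = (X i - C (a i)) ^ (k i)
        * (C ((1 : ℝ) / (k i).factorial) * hermiteFactor A ν i (a i)) := by
      rw [hg_def]; ring
    obtain ⟨r, hr⟩ := iter_pderiv_sub_pow i (a i)
      (C ((1 : ℝ) / (k i).factorial) * hermiteFactor A ν i (a i)) (k i) (m i) hmi
    rw [hcomm, hr]
    have h0 : eval a (X i - C (a i)) = 0 := by simp
    by_cases he : m i = k i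
    · rw [if_pos he, he]
      have hfne : (((k i).factorial : ℝ)) ≠ 0 := Nat.cast_ne_zero.mpr (Nat.factorial_ne_zero _)
      simp [h0, hHeval i]
      field_simp
      exact_mod_cast Nat.descFactorial_self _
    · rw [if_neg he]
      have h1 : k i - m i ≠ 0 := by omega
      simp only [map_add, map_mul, map_pow, h0, eval_C]
      rw [zero_pow h1, zero_pow (by omega : k i - m i + 1 ≠ 0)]
      ring
  rw [key, map_prod]
  refine ⟨?_, ?_, ?_⟩
  · intro hmk
    apply Finset.prod_eq_one
    intro i _
    rw [hfac i (le_of_eq (congrFun hmk i)), if_pos (congrFun hmk i)]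
  · rintro ⟨hle, hne⟩
    obtain ⟨i, hi⟩ : ∃ i, m i < k i := by
      by_contra h
      push_neg at h
      exact hne (funext fun i => le_antisymm (hle i) (h i))
    refine Finset.prod_eq_zero (Finset.mem_univ i) ?_
    rw [hfac i hi.le, if_neg (Nat.ne_of_lt hi)]
  · rintro ⟨_, hnle⟩
    obtain ⟨i, hi⟩ : ∃ i, m i < k i := by
      by_contra h
      push_neg at h
      exact hnle fun i => h i
    refine Finset.prod_eq_zero (Finset.mem_univ i) ?_
    rw [hfac i hi.le, if_neg (Nat.ne_of_lt hi)]
end
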